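/- For every ε > 0, the set {m ∈ ℤ⁺ : for all natural numbers k with 0 ≤ k ≤ log₂ m, r_k(m) · 3^(k/2) · m^(−ε) < 1} is *-dense. -/

import Mathlib

/-- The accelerated Collatz map `T(m) = m/2` if `m` even, `(3m+1)/2` if `m` odd. -/
def T (m : ℕ) : ℕ := if m % 2 = 0 then m / 2 else (3 * m + 1) / 2

/-- The parity sequence of `m`: `p(m)_k = T^[k] m mod 2`. -/
def parity (m k : ℕ) : ℕ := T^[k] m % 2

open scoped Classical in
/-- Number of elements of `A` in `{1, …, n}`. -/
noncomputable def countIn (A : Set ℕ) (n : ℕ) : ℕ :=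
  ((Finset.Icc 1 n).filter (fun m => m ∈ A)).card

/-- `S` has `(C,D)`-density: `#(S ∩ [1,N])/N ≥ 1 - C/N^D` for every positive `N`. -/
def hasCDdensity (S : Set ℕ) (C D : ℝ) : Prop :=
  ∀ N : ℕ, 0 < N → 1 - C / (N : ℝ) ^ D ≤ (countIn S N : ℝ) / N

/-- `S` has `D`-density: it has `(C,D)`-density for some `C > 0`. -/
def hasDdensity (S : Set ℕ) (D : ℝ) : Prop := ∃ C > 0, hasCDdensity S C D

/-- `S` is `*`-dense: it has `D`-density for some `0 < D ≤ 1`. -/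
def starDense (S : Set ℕ) : Prop := ∃ D, 0 < D ∧ D ≤ 1 ∧ hasDdensity S D

/-- The remainder term `r_k(m)`. -/
noncomputable def r (k m : ℕ) : ℝ :=
  ∑ i ∈ Finset.range k,
    (parity m i : ℝ) / (3 ^ (∑ j ∈ Finset.range (i + 1), parity m j) * 2 ^ (k - i))

/-!
If `m` violates the bound at some `k ≤ log₂ m`, then, since the `i`-th term of `r_k(m)` carries
the factor `3^{-(p_0 + ⋯ + p_i)}`, some initial segment of length `n ≤ k` of the parity sequence
of `m` contains at most `(n + 3 - εk)/2` odd steps. The first `n` parities depend only on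
`m mod 2^n`, and over the residues mod `2^n` the number of odd steps has generating function
`(1 + x)^n`; a Chernoff bound then shows that at most `O(N e^{-ε²k/2})` integers `m ≤ N` violate
the bound at `k`. Since `r_k(m) ≤ 1`, a violation at `k` also forces `m^{2ε} ≤ 3^k`, so for
`m > √N` only `k ≥ ε log N / 2` occur, and there are at most `√N + O(N^{1-ε³/8})` exceptions
up to `N`.
-/

open Finset Real

def oddSteps (n m : ℕ) : ℕ := ∑ j ∈ range n, parity m j

lemma parity_le_one (m i : ℕ) : parity m i ≤ 1 :=
  Nat.lt_succ_iff.mp (Nat.mod_lt _ two_pos)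

lemma parity_succ (m i : ℕ) : parity m (i + 1) = parity (T m) i := by
  simp only [parity, Function.iterate_succ_apply]

lemma two_mul_T (m : ℕ) : 2 * T m = if m % 2 = 0 then m else 3 * m + 1 := by
  unfold T; split_ifs <;> omega

lemma T_modEq {n m m' : ℕ} (h : m ≡ m' [MOD 2 ^ (n + 1)]) : T m ≡ T m' [MOD 2 ^ n] := by
  have h2 : m % 2 = m' % 2 := Nat.ModEq.of_dvd (dvd_pow_self 2 n.succ_ne_zero) h
  refine Nat.ModEq.mul_left_cancel' two_ne_zero ?_
  rw [two_mul_T, two_mul_T, h2, ← pow_succ']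
  split_ifs
  · exact h
  · exact (h.mul_left 3).add_right 1

lemma parity_eq_of_modEq {n m m' : ℕ} (h : m ≡ m' [MOD 2 ^ n]) {i : ℕ} (hi : i < n) :
    parity m i = parity m' i := by
  induction n generalizing m m' i with
  | zero => omega
  | succ n ih =>
    cases i with
    | zero => exact Nat.ModEq.of_dvd (dvd_pow_self 2 n.succ_ne_zero) h
    | succ i => rw [parity_succ, parity_succ]; exact ih (T_modEq h) (by omega)

lemma oddSteps_mod_two_pow (n m : ℕ) : oddSteps n (m % 2 ^ n) = oddSteps n m :=
  sum_congr rfl fun _ hj => parity_eq_of_modEq (Nat.mod_modEq m _) (mem_range.mp hj)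

lemma oddSteps_succ (n m : ℕ) : oddSteps (n + 1) m = m % 2 + oddSteps n (T m) := by
  simp only [oddSteps, sum_range_succ', parity_succ, add_comm]; rfl

lemma sum_range_two_mul {M : Type*} [AddCommMonoid M] (f : ℕ → M) (n : ℕ) :
    ∑ i ∈ range (2 * n), f i = ∑ j ∈ range n, (f (2 * j) + f (2 * j + 1)) := by
  induction n with
  | zero => simp
  | succ n ih => rw [Nat.mul_succ, sum_range_succ, sum_range_succ, sum_range_succ, ih, add_assoc]

lemma sum_range_comp_affine_mod {M : Type*} [AddCommMonoid M] {n a : ℕ} (ha : a.Coprime n)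
    (b : ℕ) (f : ℕ → M) : ∑ j ∈ range n, f ((a * j + b) % n) = ∑ j ∈ range n, f j := by
  rcases n.eq_zero_or_pos with rfl | hn
  · simp
  let g : Fin n → Fin n := fun j => ⟨(a * j + b) % n, Nat.mod_lt _ hn⟩
  have hg : g.Injective := fun i j hij => by
    have h : a * i ≡ a * j [MOD n] := Nat.ModEq.add_right_cancel' b (Fin.val_eq_of_eq hij)
    exact Fin.ext <| Nat.ModEq.eq_of_lt_of_lt (Nat.ModEq.cancel_left_of_coprime
      (Nat.coprime_comm.mp ha) h) i.2 j.2
  rw [← Fin.sum_univ_eq_sum_range, ← Fin.sum_univ_eq_sum_range]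
  exact (Finite.injective_iff_bijective.mp hg).sum_comp fun j => f j

lemma sum_pow_oddSteps {R : Type*} [CommSemiring R] (x : R) (n : ℕ) :
    ∑ ρ ∈ range (2 ^ n), x ^ oddSteps n ρ = (1 + x) ^ n := by
  induction n with
  | zero => simp [oddSteps]
  | succ n ih =>
    have hT_even (j : ℕ) : T (2 * j) = j := by unfold T; split_ifs <;> omega
    have hT_odd (j : ℕ) : T (2 * j + 1) = 3 * j + 2 := by unfold T; split_ifs <;> omega
    have h3 : Nat.Coprime 3 (2 ^ n) := Nat.Coprime.pow_right _ (by norm_num)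
    calc ∑ ρ ∈ range (2 ^ (n + 1)), x ^ oddSteps (n + 1) ρ
        = ∑ j ∈ range (2 ^ n), x ^ oddSteps n j
          + x * ∑ j ∈ range (2 ^ n), x ^ oddSteps n ((3 * j + 2) % 2 ^ n) := by
          simp only [pow_succ', sum_range_two_mul, oddSteps_succ, hT_even, hT_odd,
            oddSteps_mod_two_pow, sum_add_distrib, mul_sum]
          congr 1 <;> refine sum_congr rfl fun j _ => ?_
          · rw [Nat.mul_mod_right, zero_add]
          · rw [Nat.mul_add_mod, pow_add, pow_one]
      _ = (1 + x) ^ (n + 1) := by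
          rw [sum_range_comp_affine_mod h3 2 fun j => x ^ oddSteps n j, ih]; ring

lemma card_filter_le_sum_exp {ι : Type*} (s : Finset ι) (f : ι → ℝ) (τ : ℝ) {u : ℝ}
    (hu : 0 ≤ u) : (#(s.filter fun i => f i ≤ τ) : ℝ) ≤ ∑ i ∈ s, exp (u * (τ - f i)) := by
  rw [card_eq_sum_ones, Nat.cast_sum, sum_filter]
  refine sum_le_sum fun i _ => ?_
  split_ifs with h
  · exact_mod_cast one_le_exp (mul_nonneg hu (sub_nonneg.mpr h))
  · exact (exp_pos _).le

lemma card_filter_mod_le {M : ℕ} (hM : 0 < M) (N : ℕ) (P : ℕ → Prop) [DecidablePred P] :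
    #((Icc M N).filter fun m => P (m % M)) ≤ N / M * #((range M).filter P) := by
  calc #((Icc M N).filter fun m => P (m % M))
      ≤ #(((range M).filter P) ×ˢ Icc 1 (N / M)) := by
        refine card_le_card_of_injOn (fun m => (m % M, m / M)) (fun m hm => ?_) fun a _ b _ h => ?_
        · simp only [mem_coe, mem_filter, mem_Icc] at hm
          simp only [mem_coe, mem_product, mem_filter, mem_range, mem_Icc]
          exact ⟨⟨Nat.mod_lt _ hM, hm.2⟩, (Nat.one_le_div_iff hM).mpr hm.1.1,
            Nat.div_le_div_right hm.1.2⟩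
        · simp only [Prod.ext_iff] at h
          rw [← Nat.div_add_mod a M, ← Nat.div_add_mod b M, h.1, h.2]
    _ = N / M * #((range M).filter P) := by rw [card_product, Nat.card_Icc, mul_comm]; rfl

lemma card_filter_oddSteps_le (N n : ℕ) (τ : ℝ) {u : ℝ} (hu : 0 ≤ u) :
    (#((Icc (2 ^ n) N).filter fun m => (2 * oddSteps n m : ℝ) ≤ τ) : ℝ)
      ≤ N * exp (u * τ) * (exp (-u) * cosh u) ^ n := by
  have hsum : ∑ ρ ∈ range (2 ^ n), exp (u * (τ - 2 * oddSteps n ρ))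
      = exp (u * τ) * (1 + exp (-2 * u)) ^ n := by
    rw [← sum_pow_oddSteps, mul_sum]
    refine sum_congr rfl fun ρ _ => ?_
    rw [← exp_nat_mul, ← exp_add]
    ring_nf
  have hcosh : (1 + exp (-2 * u)) / 2 = exp (-u) * cosh u := by
    rw [cosh_eq, mul_div_assoc', mul_add, ← exp_add, ← exp_add, neg_add_cancel, exp_zero]
    ring_nf
  calc (#((Icc (2 ^ n) N).filter fun m => (2 * oddSteps n m : ℝ) ≤ τ) : ℝ)
      = #((Icc (2 ^ n) N).filter fun m => (2 * oddSteps n (m % 2 ^ n) : ℝ) ≤ τ) := by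
        simp only [oddSteps_mod_two_pow]
    _ ≤ (N / 2 ^ n : ℕ) * #((range (2 ^ n)).filter fun ρ => (2 * oddSteps n ρ : ℝ) ≤ τ) := by
        exact_mod_cast card_filter_mod_le (Nat.two_pow_pos n) N fun ρ => (2 * oddSteps n ρ : ℝ) ≤ τ
    _ ≤ (N / 2 ^ n : ℝ) * (exp (u * τ) * (1 + exp (-2 * u)) ^ n) := by
        gcongr
        · exact_mod_cast Nat.cast_div_le
        · rw [← hsum]
          exact card_filter_le_sum_exp _ _ τ hu
    _ = N * exp (u * τ) * (exp (-u) * cosh u) ^ n := by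
        rw [← hcosh, div_pow]
        ring

lemma sum_range_pow_sub_le {q : ℝ} (hq0 : 0 ≤ q) (hq1 : q < 1) (k : ℕ) :
    ∑ i ∈ range k, q ^ (k - i) ≤ q / (1 - q) := by
  have h : ∑ i ∈ range k, q ^ (k - i) = q * ∑ j ∈ range k, q ^ j := by
    rw [← sum_range_reflect, mul_sum]
    refine sum_congr rfl fun j hj => ?_
    rw [← pow_succ']
    congr 1
    have := mem_range.mp hj
    omega
  rw [h, ← mul_one_div]
  gcongr
  simpa using geom_sum_Ico_le_of_lt_one hq0 hq1 (m := 0) (n := k)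

lemma r_le_one (k m : ℕ) : r k m ≤ 1 :=
  calc r k m ≤ ∑ i ∈ range k, (1 / 2 : ℝ) ^ (k - i) := by
        refine sum_le_sum fun i _ => ?_
        rw [one_div_pow]
        refine div_le_div₀ zero_le_one (by exact_mod_cast parity_le_one m i) (by positivity)
          (le_mul_of_one_le_left (by positivity) (one_le_pow₀ (by norm_num)))
    _ ≤ (1 / 2) / (1 - 1 / 2) := sum_range_pow_sub_le (by norm_num) (by norm_num) k
    _ = 1 := by norm_num

/-- `m` violates the bound of `r_bound_starDense` at step `k` (see `exists_isBadAt`). -/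
def IsBadAt (ε : ℝ) (k m : ℕ) : Prop := 2 ^ k ≤ m ∧ (m : ℝ) ^ ε ≤ r k m * 3 ^ ((k : ℝ) / 2)

lemma exists_isBadAt {ε : ℝ} {m : ℕ} (hm : 0 < m)
    (h : ¬ ∀ k : ℕ, (k : ℝ) ≤ logb 2 m → r k m * (3 : ℝ) ^ ((k : ℝ) / 2) * (m : ℝ) ^ (-ε) < 1) :
    ∃ k, IsBadAt ε k m := by
  push Not at h
  obtain ⟨k, hk, hr⟩ := h
  have hm' : (0 : ℝ) < m := by exact_mod_cast hm
  rw [le_logb_iff_rpow_le one_lt_two hm', rpow_natCast] at hk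
  rw [rpow_neg hm'.le, ← div_eq_mul_inv, one_le_div (rpow_pos_of_pos hm' ε)] at hr
  exact ⟨k, by exact_mod_cast hk, hr⟩

lemma IsBadAt.log_le {ε : ℝ} {k m : ℕ} (h : IsBadAt ε k m) : ε * log m ≤ k := by
  have hm : (0 : ℝ) < m := by exact_mod_cast (Nat.two_pow_pos k).trans_le h.1
  have hlog3 : log 3 ≤ 2 := by linarith [log_le_sub_one_of_pos (zero_lt_three' ℝ)]
  calc ε * log m = log ((m : ℝ) ^ ε) := (log_rpow hm ε).symm
    _ ≤ log ((3 : ℝ) ^ ((k : ℝ) / 2)) := by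
        refine log_le_log (rpow_pos_of_pos hm ε) (h.2.trans ?_)
        exact mul_le_of_le_one_left (by positivity) (r_le_one k m)
    _ = k / 2 * log 3 := log_rpow three_pos _
    _ ≤ k := by nlinarith [(Nat.cast_nonneg k : (0 : ℝ) ≤ k)]

lemma r_mul_three_rpow_le {ε : ℝ} {k m : ℕ}
    (h : ∀ n ≤ k, n + 3 - ε * k < (2 * oddSteps n m : ℝ)) :
    r k m * 3 ^ ((k : ℝ) / 2) ≤ 7 / 9 * √3 ^ (ε * k) := by
  set w := √3 with hw_def
  have hw : w ^ 2 = 3 := sq_sqrt zero_le_three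
  have hw1 : 1 ≤ w := by nlinarith [sqrt_nonneg 3]
  have hw2 : w ≤ 7 / 4 := by nlinarith
  have h3k : (3 : ℝ) ^ ((k : ℝ) / 2) = w ^ k := by
    rw [hw_def, sqrt_eq_rpow, ← rpow_natCast, ← rpow_mul zero_le_three]; ring_nf
  have hterm : ∀ i ∈ range k, (parity m i : ℝ) / (3 ^ oddSteps (i + 1) m * 2 ^ (k - i)) * w ^ k
      ≤ w ^ (ε * k) / 9 * (w / 2) ^ (k - i) := by
    intro i hi
    have hik := mem_range.mp hi
    have hexp : w ^ (i + 4) ≤ w ^ (ε * k) * 3 ^ oddSteps (i + 1) m := by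
      rw [← hw, ← pow_mul, ← rpow_natCast, ← rpow_natCast, ← rpow_add (by positivity)]
      refine rpow_le_rpow_of_exponent_le hw1 ?_
      have := h (i + 1) hik
      push_cast at this ⊢
      linarith
    have hsplit : w ^ k = w ^ i * w ^ (k - i) := by rw [← pow_add]; congr 1; omega
    calc (parity m i : ℝ) / (3 ^ oddSteps (i + 1) m * 2 ^ (k - i)) * w ^ k
        ≤ 1 / (3 ^ oddSteps (i + 1) m * 2 ^ (k - i)) * w ^ k := by
          gcongr
          exact_mod_cast parity_le_one m i
      _ = w ^ i / 3 ^ oddSteps (i + 1) m * (w / 2) ^ (k - i) := by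
          rw [hsplit, div_pow]; field_simp
      _ ≤ w ^ (ε * k) / 9 * (w / 2) ^ (k - i) := by
          refine mul_le_mul_of_nonneg_right ?_ (by positivity)
          rw [div_le_div_iff₀ (by positivity) (by norm_num), show (9 : ℝ) = w ^ 4 by
            rw [show 4 = 2 * 2 by rfl, pow_mul, hw]; norm_num, ← pow_add]
          exact hexp
  have hgeom : w / 2 / (1 - w / 2) ≤ 7 := by
    rw [div_le_iff₀ (by linarith)]; linarith
  calc r k m * 3 ^ ((k : ℝ) / 2)
      = ∑ i ∈ range k, (parity m i : ℝ) / (3 ^ oddSteps (i + 1) m * 2 ^ (k - i)) * w ^ k := by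
        rw [r, h3k, sum_mul]; rfl
    _ ≤ ∑ i ∈ range k, w ^ (ε * k) / 9 * (w / 2) ^ (k - i) := sum_le_sum hterm
    _ ≤ w ^ (ε * k) / 9 * 7 := by
        rw [← mul_sum]
        gcongr
        exact (sum_range_pow_sub_le (by positivity) (by linarith) k).trans hgeom
    _ = 7 / 9 * w ^ (ε * k) := by ring

lemma IsBadAt.exists_oddSteps_le {ε : ℝ} (hε : 0 ≤ ε) {k m : ℕ} (h : IsBadAt ε k m) :
    ∃ n ≤ k, (2 * oddSteps n m : ℝ) ≤ n + 3 - ε * k := by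
  by_contra! hgood
  have hpos : 0 < √3 ^ (ε * k) := rpow_pos_of_pos (by positivity) _
  have hm : √3 ^ (ε * k) ≤ (m : ℝ) ^ ε :=
    calc √3 ^ (ε * k) ≤ 2 ^ (ε * k) := by
          gcongr
          exact (sqrt_le_left zero_le_two).mpr (by norm_num)
      _ = ((2 : ℝ) ^ k) ^ ε := by rw [← rpow_natCast, ← rpow_mul zero_le_two, mul_comm]
      _ ≤ (m : ℝ) ^ ε := by gcongr; exact_mod_cast h.1
  linarith [h.2.trans (r_mul_three_rpow_le hgood)]

lemma sum_range_pow_le_of_one_lt {c : ℝ} (hc : 1 < c) (n : ℕ) :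
    ∑ i ∈ range n, c ^ i ≤ c ^ n / (c - 1) := by
  rw [geom_sum_eq hc.ne']
  exact div_le_div_of_nonneg_right (by linarith) (by linarith)

open scoped Classical in
lemma filter_isBadAt_subset {ε : ℝ} (hε : 0 ≤ ε) (N k : ℕ) :
    (Icc 1 N).filter (IsBadAt ε k) ⊆ (range (k + 1)).biUnion fun n =>
      (Icc (2 ^ n) N).filter fun m => (2 * oddSteps n m : ℝ) ≤ n + 3 - ε * k := by
  intro m hm
  obtain ⟨hmN, hbad⟩ := mem_filter.mp hm
  obtain ⟨n, hnk, hn⟩ := hbad.exists_oddSteps_le hε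
  refine mem_biUnion.mpr ⟨n, mem_range.mpr (Nat.lt_succ_of_le hnk), mem_filter.mpr ⟨?_, hn⟩⟩
  exact mem_Icc.mpr ⟨(Nat.pow_le_pow_right two_pos hnk).trans hbad.1, (mem_Icc.mp hmN).2⟩

open scoped Classical in
lemma card_filter_isBadAt_le {ε : ℝ} (hε : 0 < ε) (N k : ℕ) :
    (#((Icc 1 N).filter (IsBadAt ε k)) : ℝ)
      ≤ exp (3 * ε) * (exp (ε ^ 2 / 2) / (exp (ε ^ 2 / 2) - 1)) * N * exp (-(ε ^ 2 / 2)) ^ k := by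
  set c := exp (ε ^ 2 / 2) with hc_def
  have hc : 1 < c := one_lt_exp_iff.mpr (by positivity)
  have hterm (n : ℕ) : exp (ε * (n + 3 - ε * k)) * (exp (-ε) * cosh ε) ^ n
      ≤ exp (3 * ε - ε ^ 2 * k) * c ^ n := by
    rw [mul_pow, ← mul_assoc, ← exp_nat_mul, ← exp_add]
    gcongr
    · exact le_of_eq (by ring)
    · exact cosh_le_exp_half_sq ε
  -- Chernoff with parameter `ε`: the factor `e^{-ε²k}` beats the growth `cosh ε ^ n ≤ e^{ε²n/2}`.
  calc (#((Icc 1 N).filter (IsBadAt ε k)) : ℝ)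
      ≤ ∑ n ∈ range (k + 1), (#((Icc (2 ^ n) N).filter
          fun m => (2 * oddSteps n m : ℝ) ≤ n + 3 - ε * k) : ℝ) := by
        exact_mod_cast (card_le_card (filter_isBadAt_subset hε.le N k)).trans card_biUnion_le
    _ ≤ ∑ n ∈ range (k + 1), N * exp (3 * ε - ε ^ 2 * k) * c ^ n := by
        refine sum_le_sum fun n _ => (card_filter_oddSteps_le N n _ hε.le).trans ?_
        rw [mul_assoc, mul_assoc]
        exact mul_le_mul_of_nonneg_left (hterm n) (Nat.cast_nonneg N)
    _ ≤ N * exp (3 * ε - ε ^ 2 * k) * (c ^ (k + 1) / (c - 1)) := by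
        rw [← mul_sum]
        gcongr
        exact sum_range_pow_le_of_one_lt hc _
    _ = exp (3 * ε) * (c / (c - 1)) * N * exp (-(ε ^ 2 / 2)) ^ k := by
        have hk : exp (3 * ε - ε ^ 2 * k) * c ^ k = exp (3 * ε) * exp (-(ε ^ 2 / 2)) ^ k := by
          rw [hc_def, ← exp_nat_mul, ← exp_nat_mul, ← exp_add, ← exp_add]
          ring_nf
        rw [pow_succ c k, ← mul_div_assoc, ← mul_assoc, mul_assoc _ _ (c ^ k), hk]
        ring

lemma card_filter_mul_self_le (N : ℕ) : (#((Icc 1 N).filter fun m => m * m ≤ N) : ℝ) ≤ √N := by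
  have hsub : (Icc 1 N).filter (fun m => m * m ≤ N) ⊆ Icc 1 N.sqrt := fun m hm => by
    obtain ⟨hm, hmN⟩ := mem_filter.mp hm
    exact mem_Icc.mpr ⟨(mem_Icc.mp hm).1, Nat.le_sqrt.mpr hmN⟩
  calc (#((Icc 1 N).filter fun m => m * m ≤ N) : ℝ) ≤ #(Icc 1 N.sqrt) := by
        exact_mod_cast card_le_card hsub
    _ ≤ √N := by rw [Nat.card_Icc, Nat.add_sub_cancel]; exact nat_sqrt_le_real_sqrt

lemma sum_pow_le_of_lt_one (s : Finset ℕ) {q : ℝ} (hq0 : 0 ≤ q) (hq1 : q < 1) :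
    ∑ k ∈ s, q ^ k ≤ (1 - q)⁻¹ :=
  tsum_geometric_of_lt_one hq0 hq1 ▸
    (summable_geometric_of_lt_one hq0 hq1).sum_le_tsum s fun k _ => pow_nonneg hq0 k

lemma exp_pow_le_rpow {ε : ℝ} {N : ℕ} (hN : 0 < N) {k : ℕ}
    (hk : ε * log N ≤ 2 * k) : exp (-(ε ^ 2 / 4)) ^ k ≤ (N : ℝ) ^ (-(ε ^ 3 / 8)) := by
  rw [← exp_nat_mul, rpow_def_of_pos (by exact_mod_cast hN), exp_le_exp]
  nlinarith [mul_le_mul_of_nonneg_left hk (by positivity : 0 ≤ ε ^ 2 / 8)]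

open scoped Classical in
lemma filter_exists_isBadAt_subset {ε : ℝ} (hε : 0 ≤ ε) {N : ℕ} (hN : 0 < N) :
    (Icc 1 N).filter (fun m => ∃ k, IsBadAt ε k m) ⊆ (Icc 1 N).filter (fun m => m * m ≤ N) ∪
      ((range N).filter fun k : ℕ => ε * log N ≤ 2 * (k : ℝ)).biUnion
        fun k => (Icc 1 N).filter (IsBadAt ε k) := by
  intro m hm
  obtain ⟨hmN, k, hk⟩ := mem_filter.mp hm
  rcases le_or_gt (m * m) N with hsmall | hlarge
  · exact mem_union_left _ (mem_filter.mpr ⟨hmN, hsmall⟩)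
  refine mem_union_right _ (mem_biUnion.mpr ⟨k, mem_filter.mpr ⟨?_, ?_⟩, mem_filter.mpr ⟨hmN, hk⟩⟩)
  · exact mem_range.mpr (k.lt_two_pow_self.trans_le (hk.1.trans (mem_Icc.mp hmN).2))
  · have hlog : log N ≤ 2 * log m :=
      calc log N ≤ log ((m : ℝ) ^ 2) :=
            log_le_log (by exact_mod_cast hN) (by exact_mod_cast (sq m).symm ▸ hlarge.le)
        _ = 2 * log m := by simp [log_pow]
    linarith [mul_le_mul_of_nonneg_left hlog hε, hk.log_le]

open scoped Classical in
lemma exists_card_filter_isBadAt_le {ε : ℝ} (hε : 0 < ε) : ∃ E, 0 ≤ E ∧ ∀ N : ℕ, 0 < N →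
    (#((Icc 1 N).filter fun m => ∃ k, IsBadAt ε k m) : ℝ) ≤ √N + E * N ^ (1 - ε ^ 3 / 8) := by
  set E₀ := exp (3 * ε) * (exp (ε ^ 2 / 2) / (exp (ε ^ 2 / 2) - 1))
  set q := exp (-(ε ^ 2 / 4))
  have hE₀ : 0 ≤ E₀ := mul_nonneg (exp_pos _).le
    (div_nonneg (exp_pos _).le (sub_nonneg.mpr (one_le_exp (by positivity))))
  have hq1 : q < 1 := exp_lt_one_iff.mpr (by simp only [Left.neg_neg_iff]; positivity)
  refine ⟨E₀ * (1 - q)⁻¹, mul_nonneg hE₀ (inv_nonneg.mpr (sub_nonneg.mpr hq1.le)), fun N hN => ?_⟩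
  have hN' : (0 : ℝ) < N := by exact_mod_cast hN
  set T := (range N).filter fun k : ℕ => ε * log N ≤ 2 * (k : ℝ)
  calc (#((Icc 1 N).filter fun m => ∃ k, IsBadAt ε k m) : ℝ)
      ≤ #((Icc 1 N).filter fun m => m * m ≤ N)
        + ∑ k ∈ T, (#((Icc 1 N).filter (IsBadAt ε k)) : ℝ) := by
        rw [← Nat.cast_sum, ← Nat.cast_add]
        exact Nat.cast_le.mpr <| (card_le_card (filter_exists_isBadAt_subset hε.le hN)).trans
          ((card_union_le _ _).trans (Nat.add_le_add_left card_biUnion_le _))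
    _ ≤ √N + ∑ k ∈ T, E₀ * N * (N : ℝ) ^ (-(ε ^ 3 / 8)) * q ^ k := by
        gcongr with k hk
        · exact card_filter_mul_self_le N
        · refine (card_filter_isBadAt_le hε N k).trans ?_
          have hsq : exp (-(ε ^ 2 / 2)) ^ k = q ^ k * q ^ k := by
            rw [← mul_pow, ← exp_add]; ring_nf
          rw [hsq, ← mul_assoc]
          gcongr
          exact exp_pow_le_rpow hN (mem_filter.mp hk).2
    _ ≤ √N + E₀ * (1 - q)⁻¹ * N ^ (1 - ε ^ 3 / 8) := by
        rw [← mul_sum, sub_eq_add_neg 1 (ε ^ 3 / 8), rpow_add hN', rpow_one]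
        have := mul_le_mul_of_nonneg_left (sum_pow_le_of_lt_one T (exp_pos _).le hq1)
          (by positivity : 0 ≤ E₀ * N * (N : ℝ) ^ (-(ε ^ 3 / 8)))
        linarith

open scoped Classical in
lemma starDense_of_card_filter_notMem_le {S : Set ℕ} {C D : ℝ} (hC : 0 < C) (hD0 : 0 < D)
    (hD1 : D ≤ 1) (h : ∀ N : ℕ, 0 < N → (#((Icc 1 N).filter (· ∉ S)) : ℝ) ≤ C * N ^ (1 - D)) :
    starDense S := by
  refine ⟨D, hD0, hD1, C, hC, fun N hN => ?_⟩
  have hN' : (0 : ℝ) < N := by exact_mod_cast hN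
  have hsplit : (countIn S N : ℝ) + #((Icc 1 N).filter (· ∉ S)) = N := by
    rw [countIn]
    exact_mod_cast (card_filter_add_card_filter_not _).trans (Nat.card_Icc 1 N)
  have hCN : C / (N : ℝ) ^ D * N = C * (N : ℝ) ^ (1 - D) := by
    rw [rpow_sub hN', rpow_one]; field_simp
  rw [le_div_iff₀ hN', sub_mul, one_mul, hCN]
  linarith [h N hN]

theorem r_bound_starDense (ε : ℝ) (hε : 0 < ε) :
    starDense {m : ℕ |
      ∀ k : ℕ, (k : ℝ) ≤ Real.logb 2 m →
        r k m * (3 : ℝ) ^ ((k : ℝ) / 2) * (m : ℝ) ^ (-ε) < 1} := by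
  classical
  obtain ⟨E, hE, hbad⟩ := exists_card_filter_isBadAt_le hε
  have hγ : 0 < ε ^ 3 / 8 := by positivity
  refine starDense_of_card_filter_notMem_le (C := 1 + E) (D := min (1 / 2) (ε ^ 3 / 8))
    (by positivity) (lt_min one_half_pos hγ) ((min_le_left _ _).trans one_half_lt_one.le)
    fun N hN => ?_
  have hN1 : (1 : ℝ) ≤ N := by exact_mod_cast hN
  have hsqrt : √(N : ℝ) ≤ (N : ℝ) ^ (1 - min (1 / 2) (ε ^ 3 / 8)) := by
    rw [sqrt_eq_rpow]
    exact rpow_le_rpow_of_exponent_le hN1 (by linarith [min_le_left (1 / 2 : ℝ) (ε ^ 3 / 8)])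
  have hpow : (N : ℝ) ^ (1 - ε ^ 3 / 8) ≤ (N : ℝ) ^ (1 - min (1 / 2) (ε ^ 3 / 8)) :=
    rpow_le_rpow_of_exponent_le hN1 (by linarith [min_le_right (1 / 2 : ℝ) (ε ^ 3 / 8)])
  calc _ ≤ (#((Icc 1 N).filter fun m => ∃ k, IsBadAt ε k m) : ℝ) := by
        refine Nat.cast_le.mpr (card_le_card fun m hm => ?_)
        obtain ⟨hmN, hmS⟩ := mem_filter.mp hm
        exact mem_filter.mpr ⟨hmN, exists_isBadAt (mem_Icc.mp hmN).1 hmS⟩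
    _ ≤ √N + E * N ^ (1 - ε ^ 3 / 8) := hbad N hN
    _ ≤ (1 + E) * N ^ (1 - min (1 / 2) (ε ^ 3 / 8)) := by
        linarith [mul_le_mul_of_nonneg_left hpow hE]
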